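/- arXiv:1602.03297 — 6 statements merged into one kernel-verified Lean document; each statement's English description precedes it below -/
import Mathlib

section
/- Congruence invariance: for any invertible matrix M and positive definite A, B, and s ∈ ℝ, M (A#ₛB) M* = (M A M*) #ₛ (M B M*). -/
open scoped ComplexOrder

/-- Real power of a matrix via the continuous functional calculus (for Hermitian matrices). -/
noncomputable def mpow {d : ℕ} (A : Matrix (Fin d) (Fin d) ℂ) (s : ℝ) : Matrix (Fin d) (Fin d) ℂ :=
  cfc (fun x : ℝ => x ^ s) A

/-- The s-weighted geometric mean A #ₛ B = A^(1/2) (A^(-1/2) B A^(-1/2))^s A^(1/2). -/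
noncomputable def gm {d : ℕ} (s : ℝ) (A B : Matrix (Fin d) (Fin d) ℂ) : Matrix (Fin d) (Fin d) ℂ :=
  mpow A (1/2) * mpow (mpow A (-(1/2)) * B * mpow A (-(1/2))) s * mpow A (1/2)

/-! Write `A' = M A Mᴴ`. The matrix `U = A'^(-1/2) M A^(1/2)` is unitary, since
`U Uᴴ = A'^(-1/2) (M A Mᴴ) A'^(-1/2) = 1`, and it intertwines the data of the two means:
`M A^(1/2) = A'^(1/2) U` and `U (A^(-1/2) B A^(-1/2)) Uᴴ = A'^(-1/2) (M B Mᴴ) A'^(-1/2)`.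
Real powers commute with unitary conjugation, so `M (A #ₛ B) Mᴴ = A'^(1/2) U (…)^s Uᴴ A'^(1/2)`
is the mean of `A'` and `M B Mᴴ`. -/

open Matrix

section UnitaryConj

variable {n : Type*} [Fintype n] [DecidableEq n]

lemma Matrix.cfc_unitary_conj {U : Matrix n n ℂ} (hU : U ∈ unitary (Matrix n n ℂ))
    (f : ℝ → ℝ) (X : Matrix n n ℂ) :
    cfc f (U * X * star U) = U * cfc f X * star U := by
  by_cases hX : IsSelfAdjoint X
  · have hconj : Continuous (Unitary.conjStarAlgAut ℂ _ ⟨U, hU⟩) :=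
      show Continuous fun Y : Matrix n n ℂ => U * Y * star U by fun_prop
    exact (StarAlgHomClass.map_cfc (Unitary.conjStarAlgAut ℂ _ ⟨U, hU⟩) f X
      (X.finite_real_spectrum.continuousOn f) hconj hX (hX.conjugate U)).symm
  · have hUX : ¬ IsSelfAdjoint (U * X * star U) := fun h => hX <| by
      have hXU : star U * (U * X * star U) * U = X := by
        simp only [← mul_assoc, Unitary.star_mul_self_of_mem hU, one_mul]
        rw [mul_assoc, Unitary.star_mul_self_of_mem hU, mul_one]
      simpa only [hXU] using h.conjugate' U
    rw [cfc_apply_of_not_predicate _ hX, cfc_apply_of_not_predicate _ hUX, mul_zero, zero_mul]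

end UnitaryConj

section MatrixPower

variable {d : ℕ} {A : Matrix (Fin d) (Fin d) ℂ}

lemma mpow_isSelfAdjoint (A : Matrix (Fin d) (Fin d) ℂ) (s : ℝ) : IsSelfAdjoint (mpow A s) :=
  cfc_predicate _ _

lemma mpow_unitary_conj {U : Matrix (Fin d) (Fin d) ℂ} (hU : U ∈ unitary _)
    (X : Matrix (Fin d) (Fin d) ℂ) (s : ℝ) :
    mpow (U * X * star U) s = U * mpow X s * star U :=
  cfc_unitary_conj hU _ X

lemma mpow_add (hA : A.PosDef) (r t : ℝ) : mpow A (r + t) = mpow A r * mpow A t := by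
  have hsa : IsSelfAdjoint A := hA.isHermitian
  rw [mpow, mpow, mpow, ← cfc_mul _ _ A (A.finite_real_spectrum.continuousOn _)
    (A.finite_real_spectrum.continuousOn _)]
  refine cfc_congr fun x hx => Real.rpow_add ?_ r t
  rw [hA.isHermitian.spectrum_real_eq_range_eigenvalues] at hx
  obtain ⟨i, rfl⟩ := hx
  exact hA.eigenvalues_pos i

lemma mpow_zero (hA : A.PosDef) : mpow A 0 = 1 := by
  have hsa : IsSelfAdjoint A := hA.isHermitian
  simpa [mpow] using cfc_const_one ℝ A

lemma mpow_one (hA : A.PosDef) : mpow A 1 = A := by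
  have hsa : IsSelfAdjoint A := hA.isHermitian
  simpa [mpow] using cfc_id' ℝ A

lemma mpow_half_mul_mpow_half (hA : A.PosDef) : mpow A (1/2) * mpow A (1/2) = A := by
  rw [← mpow_add hA]; norm_num [mpow_one hA]

lemma mpow_neg_mul_mpow (hA : A.PosDef) (r : ℝ) : mpow A (-r) * mpow A r = 1 := by
  rw [← mpow_add hA, neg_add_cancel, mpow_zero hA]

lemma mpow_mul_mpow_neg (hA : A.PosDef) (r : ℝ) : mpow A r * mpow A (-r) = 1 := by
  rw [← mpow_add hA, add_neg_cancel, mpow_zero hA]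

end MatrixPower

lemma mpow_neg_half_mul_mul_mpow_half_mem_unitary {d : ℕ} {A M : Matrix (Fin d) (Fin d) ℂ}
    (hA : A.PosDef) (hA' : (M * A * Mᴴ).PosDef) :
    mpow (M * A * Mᴴ) (-(1/2)) * M * mpow A (1/2) ∈ unitary (Matrix (Fin d) (Fin d) ℂ) := by
  have hSS := mpow_half_mul_mpow_half hA
  have hSS' := mpow_half_mul_mpow_half hA'
  have hNS' := mpow_neg_mul_mpow hA' (1/2)
  have hS'N := mpow_mul_mpow_neg hA' (1/2)
  have hS := (mpow_isSelfAdjoint A (1/2)).star_eq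
  have hN' := (mpow_isSelfAdjoint (M * A * Mᴴ) (-(1/2))).star_eq
  set S := mpow A (1/2)
  set S' := mpow (M * A * Mᴴ) (1/2)
  set N' := mpow (M * A * Mᴴ) (-(1/2))
  have h : N' * M * S * star (N' * M * S) = 1 := calc
    _ = N' * (M * (S * S) * Mᴴ) * N' := by
      simp only [star_mul, hS, hN', star_eq_conjTranspose, mul_assoc]
    _ = (N' * S') * (S' * N') := by rw [hSS, ← hSS']; simp only [mul_assoc]
    _ = 1 := by rw [hNS', hS'N, one_mul]
  exact Unitary.mem_iff.mpr ⟨mul_eq_one_comm.mp h, h⟩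

open Matrix in
theorem gm_congruence_invariance_general {d : ℕ} (A B M : Matrix (Fin d) (Fin d) ℂ)
    (hA : A.PosDef) (hM : IsUnit M) (s : ℝ) :
    M * gm s A B * Mᴴ = gm s (M * A * Mᴴ) (M * B * Mᴴ) := by
  have hA' : (M * A * Mᴴ).PosDef :=
    hA.mul_mul_conjTranspose_same (vecMul_injective_iff_isUnit.mpr hM)
  have hU := mpow_neg_half_mul_mul_mpow_half_mem_unitary hA hA'
  have hSN := mpow_mul_mpow_neg hA (1/2)
  have hS'N' := mpow_mul_mpow_neg hA' (1/2)
  have hS := (mpow_isSelfAdjoint A (1/2)).star_eq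
  have hN := (mpow_isSelfAdjoint A (-(1/2))).star_eq
  have hS' := (mpow_isSelfAdjoint (M * A * Mᴴ) (1/2)).star_eq
  have hN' := (mpow_isSelfAdjoint (M * A * Mᴴ) (-(1/2))).star_eq
  set S := mpow A (1/2)
  set N := mpow A (-(1/2))
  set S' := mpow (M * A * Mᴴ) (1/2)
  set N' := mpow (M * A * Mᴴ) (-(1/2))
  set U := N' * M * S
  have hMS : M * S = S' * U := by simp only [U, ← mul_assoc, hS'N', one_mul]
  have hUN : U * N = N' * M := by simp only [U, mul_assoc, hSN, mul_one]
  have hSM : S * Mᴴ = star U * S' := by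
    simpa only [star_mul, hS, hS', star_eq_conjTranspose] using congrArg star hMS
  have hNU : N * star U = Mᴴ * N' := by
    simpa only [star_mul, hN, hN', star_eq_conjTranspose] using congrArg star hUN
  have hconj : U * (N * B * N) * star U = N' * (M * B * Mᴴ) * N' := calc
    _ = U * N * B * (N * star U) := by simp only [mul_assoc]
    _ = N' * (M * B * Mᴴ) * N' := by rw [hUN, hNU]; simp only [mul_assoc]
  calc M * gm s A B * Mᴴ = M * S * mpow (N * B * N) s * (S * Mᴴ) := by
        simp only [gm, mul_assoc]; rfl
    _ = S' * (U * mpow (N * B * N) s * star U) * S' := by rw [hMS, hSM]; simp only [mul_assoc]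
    _ = gm s (M * A * Mᴴ) (M * B * Mᴴ) := by rw [← mpow_unitary_conj hU, hconj]; rfl

open Matrix in
theorem gm_congruence_invariance {d : ℕ} (A B M : Matrix (Fin d) (Fin d) ℂ)
    (hA : A.PosDef) (hB : B.PosDef) (hM : IsUnit M) (s : ℝ) :
    M * gm s A B * Mᴴ = gm s (M * A * Mᴴ) (M * B * Mᴴ) :=
  gm_congruence_invariance_general A B M hA hM s
end

section
/- Joint concavity of the weighted geometric mean: for positive definite matrices A, B, C, D and λ, s ∈ [0,1], (λA + (1−λ)B) #ₛ (λC + (1−λ)D) ⪰ λ(A#ₛC) + (1−λ)(B#ₛD) in the Loewner order. -/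
/-!
For `s = 1/2` the mean `A #½ B` is the largest Hermitian `X` with `X A⁻¹ X ≤ B`: with
`Y = A^(-1/2) X A^(-1/2)` and `C = A^(-1/2) B A^(-1/2)` this says `Y² ≤ C ⇒ Y ≤ √C`, which follows
from `Y ≤ |Y| = √(Y²)` and operator monotonicity of the square root. Since `(X, A) ↦ X A⁻¹ X` is
jointly convex (a Schur complement condition on `[[A, X], [X, C]]`), `#½` is jointly concave, and
it is monotone because inversion is operator antitone. The identity
`A #_((a+b)/2) B = (A #_a B) #½ (A #_b B)` then carries joint concavity from `s = 0, 1` to all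
dyadic `s`, and continuity in `s` to all of `[0, 1]`.
-/

open scoped ComplexOrder

open scoped MatrixOrder Matrix.Norms.L2Operator
open Matrix Set Filter

lemma Icc_zero_one_subset_of_isClosed_of_midpoint_mem {S : Set ℝ} (hS : IsClosed S) (h0 : 0 ∈ S)
    (h1 : 1 ∈ S) (hmid : ∀ a ∈ S, ∀ b ∈ S, (a + b) / 2 ∈ S) : Icc 0 1 ⊆ S := by
  have hdyadic : ∀ n k : ℕ, k ≤ 2 ^ n → (k : ℝ) / 2 ^ n ∈ S := by
    intro n
    induction n with
    | zero =>
      intro k hk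
      interval_cases k <;> simpa
    | succ n ih =>
      intro k hk
      rw [pow_succ] at hk
      obtain ⟨m, rfl | rfl⟩ := Nat.even_or_odd' k
      · convert ih m (by omega) using 1
        push_cast
        field_simp
        ring
      · convert hmid _ (ih m (by omega)) _ (ih (m + 1) (by omega)) using 1
        push_cast
        field_simp
        ring
  rintro s ⟨hs0, hs1⟩
  refine hS.mem_of_tendsto ((tendsto_nat_floor_mul_div_atTop hs0).comp
    (tendsto_pow_atTop_atTop_of_one_lt one_lt_two)) (Eventually.of_forall fun n => ?_)
  simpa using hdyadic n _ (Nat.floor_le_of_le (mul_le_of_le_one_left (by positivity) hs1))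

lemma continuous_cfc_const_rpow {𝒜 : Type*} [Ring 𝒜] [StarRing 𝒜] [TopologicalSpace 𝒜]
    [Algebra ℝ 𝒜] {p : 𝒜 → Prop} [ContinuousFunctionalCalculus ℝ 𝒜 p] {a : 𝒜}
    (ha : ∀ x ∈ spectrum ℝ a, 0 < x) : Continuous fun s : ℝ => cfc (fun x : ℝ => x ^ s) a := by
  refine continuous_iff_continuousAt.2 fun s₀ => continuousAt_cfc_fun ?_ ?_
  · have hK : IsCompact (Metric.closedBall s₀ 1 ×ˢ spectrum ℝ a) :=
      (isCompact_closedBall _ _).prod (ContinuousFunctionalCalculus.isCompact_spectrum a)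
    have hcont : ContinuousOn ↿(fun s x : ℝ => x ^ s) (Metric.closedBall s₀ 1 ×ˢ spectrum ℝ a) :=
      fun q hq => (continuousAt_snd.rpow continuousAt_fst (Or.inl (ha _ hq.2).ne')).continuousWithinAt
    have := (hK.uniformContinuousOn_of_continuous hcont).tendstoUniformlyOn
      (Metric.mem_closedBall_self zero_le_one)
    rwa [nhdsWithin_eq_nhds.2 (Metric.closedBall_mem_nhds _ one_pos)] at this
  · exact Eventually.of_forall fun s => continuousOn_id.rpow_const fun x hx => Or.inl (ha x hx).ne'

section CStarAlgebra

variable {𝒜 : Type*} [CStarAlgebra 𝒜] [PartialOrder 𝒜] [StarOrderedRing 𝒜] {a b : 𝒜}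

lemma rpow_mul_mul_rpow_nonneg (a : 𝒜) (x : ℝ) (hb : 0 ≤ b) : 0 ≤ a ^ x * b * a ^ x :=
  CFC.rpow_nonneg.isSelfAdjoint.conjugate_nonneg hb

namespace IsStrictlyPositive

lemma rpow_mul_mul_rpow (ha : IsStrictlyPositive a) (hb : IsStrictlyPositive b) (x : ℝ) :
    IsStrictlyPositive (a ^ x * b * a ^ x) :=
  conjugate_of_isUnit_of_isSelfAdjoint _ _ (IsStrictlyPositive.rpow a x ha).isUnit
    CFC.rpow_nonneg.isSelfAdjoint hb

lemma rpow_mul_rpow_neg_mul (ha : IsStrictlyPositive a) (x : ℝ) (b : 𝒜) :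
    a ^ x * (a ^ (-x) * b) = b := by
  rw [← mul_assoc, CFC.rpow_mul_rpow_neg x ha, one_mul]

lemma rpow_neg_mul_rpow_mul (ha : IsStrictlyPositive a) (x : ℝ) (b : 𝒜) :
    a ^ (-x) * (a ^ x * b) = b := by
  rw [← mul_assoc, CFC.rpow_neg_mul_rpow x ha, one_mul]

end IsStrictlyPositive

end CStarAlgebra

namespace Matrix

variable {n 𝕜 : Type*} [RCLike 𝕜] {A B X Y C D : Matrix n n 𝕜}

lemma PosDef.smul_add_smul (hA : A.PosDef) (hB : B.PosDef) {l : ℝ} (hl : l ∈ Icc 0 1) :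
    (l • A + (1 - l) • B).PosDef := by
  rcases hl.1.eq_or_lt with rfl | hl0
  · simpa using hB
  · exact (hA.smul hl0).add_posSemidef (hB.posSemidef.smul (sub_nonneg.2 hl.2))

lemma PosSemidef.smul_add_smul (hA : A.PosSemidef) (hB : B.PosSemidef) {l : ℝ}
    (hl : l ∈ Icc 0 1) : (l • A + (1 - l) • B).PosSemidef :=
  (hA.smul hl.1).add (hB.smul (sub_nonneg.2 hl.2))

lemma IsHermitian.smul_add_smul (hX : X.IsHermitian) (hY : Y.IsHermitian) (l : ℝ) :
    (l • X + (1 - l) • Y).IsHermitian :=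
  ((IsSelfAdjoint.all l).smul hX).add ((IsSelfAdjoint.all _).smul hY)

variable [Fintype n] [DecidableEq n]

lemma mul_inv_mul_le_iff_nonneg_fromBlocks (hA : A.PosDef) (hX : X.IsHermitian) :
    X * A⁻¹ * X ≤ C ↔ 0 ≤ fromBlocks A X X C := by
  let := hA.isUnit.invertible
  have h := hA.fromBlocks₁₁ X C
  rw [hX.eq] at h
  rw [le_iff, nonneg_iff_posSemidef, h]

lemma smul_add_smul_mul_inv_mul_le (hA : A.PosDef) (hB : B.PosDef) (hX : X.IsHermitian)
    (hY : Y.IsHermitian) {l : ℝ} (hl : l ∈ Icc 0 1) (hXC : X * A⁻¹ * X ≤ C)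
    (hYD : Y * B⁻¹ * Y ≤ D) :
    (l • X + (1 - l) • Y) * (l • A + (1 - l) • B)⁻¹ * (l • X + (1 - l) • Y) ≤
      l • C + (1 - l) • D := by
  rw [mul_inv_mul_le_iff_nonneg_fromBlocks hA hX] at hXC
  rw [mul_inv_mul_le_iff_nonneg_fromBlocks hB hY] at hYD
  rw [mul_inv_mul_le_iff_nonneg_fromBlocks (hA.smul_add_smul hB hl) (hX.smul_add_smul hY l),
    ← fromBlocks_add, ← fromBlocks_smul, ← fromBlocks_smul]
  exact add_nonneg (smul_nonneg hl.1 hXC) (smul_nonneg (sub_nonneg.2 hl.2) hYD)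

end Matrix

lemma Matrix.PosDef.rpow_neg_half_mul_self {n : Type*} [Fintype n] [DecidableEq n]
    {A : Matrix n n ℂ} (hA : A.PosDef) : A ^ (-(1/2) : ℝ) * A ^ (-(1/2) : ℝ) = A⁻¹ := by
  rw [← CFC.rpow_add hA.isUnit, nonsing_inv_eq_ringInverse,
    CFC.inverse_eq_rpow_neg_one hA.isStrictlyPositive]
  norm_num

section GeometricMean

variable {d : ℕ} {A B C D G X : Matrix (Fin d) (Fin d) ℂ}

lemma mpow_eq_rpow (hA : A.PosSemidef) (s : ℝ) : mpow A s = A ^ s :=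
  (CFC.rpow_eq_cfc_real hA.nonneg).symm

lemma gm_eq (hA : A.PosSemidef) (hB : B.PosSemidef) (s : ℝ) :
    gm s A B = A ^ (1/2 : ℝ) * (A ^ (-(1/2) : ℝ) * B * A ^ (-(1/2) : ℝ)) ^ s * A ^ (1/2 : ℝ) := by
  simp only [gm, mpow_eq_rpow hA]
  rw [mpow_eq_rpow (rpow_mul_mul_rpow_nonneg A _ hB.nonneg).posSemidef]

lemma gm_nonneg (hA : A.PosSemidef) (hB : B.PosSemidef) (s : ℝ) : 0 ≤ gm s A B := by
  rw [gm_eq hA hB]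
  exact rpow_mul_mul_rpow_nonneg A _ CFC.rpow_nonneg

lemma gm_posDef (hA : A.PosDef) (hB : B.PosDef) (s : ℝ) : (gm s A B).PosDef := by
  have hA' := hA.isStrictlyPositive
  rw [gm_eq hA.posSemidef hB.posSemidef, ← isStrictlyPositive_iff_posDef]
  exact hA'.rpow_mul_mul_rpow
    (IsStrictlyPositive.rpow _ s (hA'.rpow_mul_mul_rpow hB.isStrictlyPositive _)) _

lemma gm_zero (hA : A.PosSemidef) (hB : B.PosSemidef) : gm 0 A B = A := by
  rw [gm_eq hA hB, CFC.rpow_zero _ (rpow_mul_mul_rpow_nonneg A _ hB.nonneg), mul_one,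
    ← CFC.sqrt_eq_rpow, CFC.sqrt_mul_sqrt_self A hA.nonneg]

lemma gm_one (hA : A.PosDef) (hB : B.PosSemidef) : gm 1 A B = B := by
  have hA' := hA.isStrictlyPositive
  rw [gm_eq hA.posSemidef hB, CFC.rpow_one _ (rpow_mul_mul_rpow_nonneg A _ hB.nonneg)]
  simp only [mul_assoc, hA'.rpow_mul_rpow_neg_mul, CFC.rpow_neg_mul_rpow _ hA', mul_one]

lemma gm_half_mul_inv_mul (hA : A.PosDef) (hB : B.PosSemidef) :
    gm (1/2) A B * A⁻¹ * gm (1/2) A B = B := by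
  have hA' := hA.isStrictlyPositive
  rw [gm_eq hA.posSemidef hB, ← hA.rpow_neg_half_mul_self]
  set c := A ^ (-(1/2) : ℝ) * B * A ^ (-(1/2) : ℝ) with hc
  have hsq : c ^ (1/2 : ℝ) * c ^ (1/2 : ℝ) = c := by
    rw [← CFC.sqrt_eq_rpow]
    exact CFC.sqrt_mul_sqrt_self c (rpow_mul_mul_rpow_nonneg A _ hB.nonneg)
  calc _ = A ^ (1/2 : ℝ) * (c ^ (1/2 : ℝ) * c ^ (1/2 : ℝ)) * A ^ (1/2 : ℝ) := by
        simp only [mul_assoc, hA'.rpow_mul_rpow_neg_mul, hA'.rpow_neg_mul_rpow_mul]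
    _ = B := by
        rw [hsq, hc]
        simp only [mul_assoc, hA'.rpow_mul_rpow_neg_mul, CFC.rpow_neg_mul_rpow _ hA', mul_one]

lemma eq_gm_half_of_mul_inv_mul (hA : A.PosDef) (hG : 0 ≤ G) (h : G * A⁻¹ * G = B) :
    G = gm (1/2) A B := by
  have hA' := hA.isStrictlyPositive
  have hB : 0 ≤ B := h ▸ hG.isSelfAdjoint.conjugate_nonneg hA.inv.posSemidef.nonneg
  have hsq : A ^ (-(1/2) : ℝ) * G * A ^ (-(1/2) : ℝ) * (A ^ (-(1/2) : ℝ) * G * A ^ (-(1/2) : ℝ)) =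
      A ^ (-(1/2) : ℝ) * B * A ^ (-(1/2) : ℝ) := by
    rw [← h, ← hA.rpow_neg_half_mul_self]
    simp only [mul_assoc]
  rw [gm_eq hA.posSemidef hB.posSemidef,
    ← CFC.sqrt_eq_rpow (a := A ^ (-(1/2) : ℝ) * B * A ^ (-(1/2) : ℝ)),
    CFC.sqrt_unique hsq (rpow_mul_mul_rpow_nonneg A _ hG)]
  simp only [mul_assoc, hA'.rpow_mul_rpow_neg_mul, CFC.rpow_neg_mul_rpow _ hA', mul_one]

lemma le_gm_half_of_mul_inv_mul_le (hA : A.PosDef) (hB : B.PosSemidef) (hX : X.IsHermitian)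
    (h : X * A⁻¹ * X ≤ B) : X ≤ gm (1/2) A B := by
  have hA' := hA.isStrictlyPositive
  have hp : IsSelfAdjoint (A ^ (-(1/2) : ℝ)) := CFC.rpow_nonneg.isSelfAdjoint
  set Y := A ^ (-(1/2) : ℝ) * X * A ^ (-(1/2) : ℝ) with hY_def
  have hY : IsSelfAdjoint Y := by
    simp only [hY_def, IsSelfAdjoint, star_mul, hp.star_eq, hX.star_eq, mul_assoc]
  have hYY : Y * Y ≤ A ^ (-(1/2) : ℝ) * B * A ^ (-(1/2) : ℝ) := by
    calc Y * Y = A ^ (-(1/2) : ℝ) * (X * A⁻¹ * X) * A ^ (-(1/2) : ℝ) := by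
          rw [← hA.rpow_neg_half_mul_self]
          simp only [hY_def, mul_assoc]
      _ ≤ _ := hp.conjugate_le_conjugate h
  have hY_le_abs : Y ≤ CFC.abs Y :=
    sub_nonneg.1 (by rw [CFC.abs_sub_self Y hY]; exact nsmul_nonneg (CFC.negPart_nonneg Y) 2)
  have habs : CFC.abs Y ≤ (A ^ (-(1/2) : ℝ) * B * A ^ (-(1/2) : ℝ)) ^ (1/2 : ℝ) := by
    rw [CFC.abs, hY.star_eq, ← CFC.sqrt_eq_rpow]
    exact CFC.sqrt_le_sqrt _ _ hYY
  calc X = A ^ (1/2 : ℝ) * Y * A ^ (1/2 : ℝ) := by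
        simp only [hY_def, mul_assoc, hA'.rpow_mul_rpow_neg_mul, CFC.rpow_neg_mul_rpow _ hA',
          mul_one]
    _ ≤ _ := CFC.rpow_nonneg.isSelfAdjoint.conjugate_le_conjugate (hY_le_abs.trans habs)
    _ = gm (1/2) A B := (gm_eq hA.posSemidef hB _).symm

lemma gm_half_mono {A' B' : Matrix (Fin d) (Fin d) ℂ} (hA : A.PosDef) (hB : B.PosSemidef)
    (hAA' : A ≤ A') (hBB' : B ≤ B') : gm (1/2) A B ≤ gm (1/2) A' B' := by
  have hA' : A'.PosDef := isStrictlyPositive_iff_posDef.1 (hA.isStrictlyPositive.of_le hAA')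
  have hG := (gm_nonneg hA.posSemidef hB (1/2)).isSelfAdjoint
  have hinv : A'⁻¹ ≤ A⁻¹ := by
    simpa only [← nonsing_inv_eq_ringInverse] using
      CStarAlgebra.ringInverse_le_ringInverse hAA' hA.isStrictlyPositive
  refine le_gm_half_of_mul_inv_mul_le hA' (hB.nonneg.trans hBB').posSemidef hG ?_
  calc _ ≤ gm (1/2) A B * A⁻¹ * gm (1/2) A B := hG.conjugate_le_conjugate hinv
    _ = B := gm_half_mul_inv_mul hA hB
    _ ≤ B' := hBB'

lemma gm_half_jointly_concave (hA : A.PosDef) (hB : B.PosDef) (hC : C.PosSemidef)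
    (hD : D.PosSemidef) {l : ℝ} (hl : l ∈ Icc 0 1) :
    l • gm (1/2) A C + (1 - l) • gm (1/2) B D ≤
      gm (1/2) (l • A + (1 - l) • B) (l • C + (1 - l) • D) := by
  have hGAC := (gm_nonneg hA.posSemidef hC (1/2)).isSelfAdjoint
  have hGBD := (gm_nonneg hB.posSemidef hD (1/2)).isSelfAdjoint
  exact le_gm_half_of_mul_inv_mul_le (hA.smul_add_smul hB hl) (hC.smul_add_smul hD hl)
    (hGAC.isHermitian.smul_add_smul hGBD l)
    (smul_add_smul_mul_inv_mul_le hA hB hGAC hGBD hl (gm_half_mul_inv_mul hA hC).le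
      (gm_half_mul_inv_mul hB hD).le)

lemma gm_add_div_two (hA : A.PosDef) (hB : B.PosDef) (s t : ℝ) :
    gm ((s + t) / 2) A B = gm (1/2) (gm s A B) (gm t A B) := by
  refine eq_gm_half_of_mul_inv_mul (gm_posDef hA hB s) (gm_nonneg hA.posSemidef hB.posSemidef _) ?_
  have hA' := hA.isStrictlyPositive
  have hc := hA'.rpow_mul_mul_rpow hB.isStrictlyPositive (-(1/2))
  simp only [gm_eq hA.posSemidef hB.posSemidef]
  set c := A ^ (-(1/2) : ℝ) * B * A ^ (-(1/2) : ℝ)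
  have hinv : (A ^ (1/2 : ℝ) * c ^ s * A ^ (1/2 : ℝ))⁻¹ =
      A ^ (-(1/2) : ℝ) * c ^ (-s) * A ^ (-(1/2) : ℝ) := by
    refine inv_eq_right_inv ?_
    simp only [mul_assoc, hA'.rpow_mul_rpow_neg_mul, hc.rpow_mul_rpow_neg_mul,
      CFC.rpow_mul_rpow_neg _ hA']
  have hexp : c ^ ((s + t) / 2) * c ^ (-s) * c ^ ((s + t) / 2) = c ^ t := by
    rw [← CFC.rpow_add hc.isUnit, ← CFC.rpow_add hc.isUnit]
    ring_nf
  rw [hinv, ← hexp]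
  simp only [mul_assoc, hA'.rpow_mul_rpow_neg_mul, hA'.rpow_neg_mul_rpow_mul]

lemma gm_jointly_concave_add_div_two (hA : A.PosDef) (hB : B.PosDef) (hC : C.PosDef)
    (hD : D.PosDef) {l : ℝ} (hl : l ∈ Icc 0 1) {a b : ℝ}
    (ha : l • gm a A C + (1 - l) • gm a B D ≤ gm a (l • A + (1 - l) • B) (l • C + (1 - l) • D))
    (hb : l • gm b A C + (1 - l) • gm b B D ≤ gm b (l • A + (1 - l) • B) (l • C + (1 - l) • D)) :
    l • gm ((a + b) / 2) A C + (1 - l) • gm ((a + b) / 2) B D ≤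
      gm ((a + b) / 2) (l • A + (1 - l) • B) (l • C + (1 - l) • D) := by
  rw [gm_add_div_two hA hC, gm_add_div_two hB hD,
    gm_add_div_two (hA.smul_add_smul hB hl) (hC.smul_add_smul hD hl)]
  calc _ ≤ gm (1/2) (l • gm a A C + (1 - l) • gm a B D) (l • gm b A C + (1 - l) • gm b B D) :=
        gm_half_jointly_concave (gm_posDef hA hC a) (gm_posDef hB hD a)
          (gm_posDef hA hC b).posSemidef (gm_posDef hB hD b).posSemidef hl
    _ ≤ _ := gm_half_mono ((gm_posDef hA hC a).smul_add_smul (gm_posDef hB hD a) hl)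
          ((gm_posDef hA hC b).posSemidef.smul_add_smul (gm_posDef hB hD b).posSemidef hl) ha hb

lemma continuous_gm (hA : A.PosDef) (hB : B.PosDef) : Continuous fun s => gm s A B := by
  have hc := hA.isStrictlyPositive.rpow_mul_mul_rpow hB.isStrictlyPositive (-(1/2))
  rw [← mpow_eq_rpow hA.posSemidef] at hc
  exact (continuous_const.mul (continuous_cfc_const_rpow fun _ => hc.spectrum_pos)).mul
    continuous_const

end GeometricMean

theorem gm_joint_concavity {d : ℕ} (A B C D : Matrix (Fin d) (Fin d) ℂ)
    (hA : A.PosDef) (hB : B.PosDef) (hC : C.PosDef) (hD : D.PosDef)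
    (l s : ℝ) (hl : l ∈ Set.Icc (0 : ℝ) 1) (hs : s ∈ Set.Icc (0 : ℝ) 1) :
    (gm s (l • A + (1 - l) • B) (l • C + (1 - l) • D)
      - (l • gm s A C + (1 - l) • gm s B D)).PosSemidef := by
  have hM := hA.smul_add_smul hB hl
  have hN := hC.smul_add_smul hD hl
  suffices Icc 0 1 ⊆ {t | l • gm t A C + (1 - l) • gm t B D ≤
      gm t (l • A + (1 - l) • B) (l • C + (1 - l) • D)} from this hs
  refine Icc_zero_one_subset_of_isClosed_of_midpoint_mem ?_ ?_ ?_
    fun a ha b hb => gm_jointly_concave_add_div_two hA hB hC hD hl ha hb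
  · exact isClosed_le (((continuous_gm hA hC).const_smul l).add
      ((continuous_gm hB hD).const_smul (1 - l))) (continuous_gm hM hN)
  · rw [mem_ofPred_eq, gm_zero hA.posSemidef hC.posSemidef, gm_zero hB.posSemidef hD.posSemidef,
      gm_zero hM.posSemidef hN.posSemidef]
  · rw [mem_ofPred_eq, gm_one hA hC.posSemidef, gm_one hB hD.posSemidef,
      gm_one hM hN.posSemidef]
end

section
/- For positive definite matrices A, B and s ∈ [0,1], Tr(A#ₛB) ≤ Tr(A^((1-s)/2) B^s A^((1-s)/2)). -/
/-!
For `0 < s < 1`, the scalar geometric mean `α ^ (1 - s) * β ^ s` is a positive integral over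
`t > 0` of the parallel sums `α * β / (t * α + β)` (the integral representation of `x ↦ x ^ s`),
so it suffices to prove the inequality for these kernels, one `t` at a time.

Write `A = G Gᴴ` and `B = G diag(c) Gᴴ`, with `G = A^(1/2) W` for a unitary `W` diagonalising
`A^(-1/2) B A^(-1/2)`. Then `A #ₛ B = G diag(c ^ s) Gᴴ`, so the left trace is `∑ᵢ cᵢ ^ s ‖gᵢ‖²`
over the columns `gᵢ` of `G`, while the right trace is `∑ⱼₖ aⱼ ^ (1 - s) bₖ ^ s |⟨uⱼ, vₖ⟩|²` in
eigenbases of `A` and `B`. For any splitting `x + y = 1`, Cauchy–Schwarz gives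
`‖g‖ ≤ ‖x g‖ + ‖yᴴ g‖`, hence `t c / (t + c) ‖g‖² ≤ t ‖x g‖² + c ‖yᴴ g‖²`; summing over the columns
bounds the kernel version of the left trace by `t Tr(x A xᴴ) + Tr(yᴴ B y)`. For the splitting that
is diagonal in the two eigenbases, this bound is exactly the kernel version of the right trace.
-/

open scoped ComplexOrder

open MeasureTheory Set

universe u

namespace Real

lemma exists_measure_rpow_mul_rpow_eq_integral {p : ℝ} (hp : p ∈ Ioo 0 1) :
    ∃ μ : Measure ℝ, ∀ α β : ℝ, 0 < α → 0 < β →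
      IntegrableOn (fun t => t ^ (p - 1) * (α * β / (t * α + β))) (Ioi 0) μ ∧
      α ^ (1 - p) * β ^ p = ∫ t in Ioi 0, t ^ (p - 1) * (α * β / (t * α + β)) ∂μ := by
  obtain ⟨μ, hμ⟩ := exists_measure_rpow_eq_integral_rpowIntegrand₀₁ hp
  refine ⟨μ, fun α β hα hβ => ?_⟩
  obtain ⟨hint, hrep⟩ := hμ (β / α) (div_pos hβ hα).le
  have hkernel : EqOn (fun t => α * rpowIntegrand₀₁ p t (β / α))
      (fun t => t ^ (p - 1) * (α * β / (t * α + β))) (Ioi 0) := fun t ht => by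
    have : t * α + β ≠ 0 := (add_pos (mul_pos ht hα) hβ).ne'
    simp only [rpowIntegrand₀₁_eq_pow_div hp (le_of_lt ht) (div_pos hβ hα).le]
    field_simp
  refine ⟨IntegrableOn.congr_fun (hint.const_mul α) hkernel measurableSet_Ioi, ?_⟩
  rw [← setIntegral_congr_fun measurableSet_Ioi hkernel, integral_const_mul, ← hrep,
    div_rpow hβ.le hα.le, rpow_sub hα, rpow_one]
  field_simp

lemma sum_mul_rpow_mul_rpow_le_of_forall_sum_le {ι κ : Type u} [Fintype ι] [Fintype κ] {p : ℝ}
    (hp : p ∈ Ioo 0 1) {γ α β : ι → ℝ} {δ α' β' : κ → ℝ} (hα : ∀ i, 0 < α i) (hβ : ∀ i, 0 < β i)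
    (hα' : ∀ j, 0 < α' j) (hβ' : ∀ j, 0 < β' j)
    (h : ∀ t, 0 < t → ∑ i, γ i * (α i * β i / (t * α i + β i))
      ≤ ∑ j, δ j * (α' j * β' j / (t * α' j + β' j))) :
    ∑ i, γ i * (α i ^ (1 - p) * β i ^ p) ≤ ∑ j, δ j * (α' j ^ (1 - p) * β' j ^ p) := by
  obtain ⟨μ, hμ⟩ := exists_measure_rpow_mul_rpow_eq_integral hp
  have hsum : ∀ {ι : Type u} [Fintype ι] (γ α β : ι → ℝ), (∀ i, 0 < α i) → (∀ i, 0 < β i) →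
      ∑ i, γ i * (α i ^ (1 - p) * β i ^ p)
        = ∫ t in Ioi 0, t ^ (p - 1) * ∑ i, γ i * (α i * β i / (t * α i + β i)) ∂μ ∧
      IntegrableOn (fun t => t ^ (p - 1) * ∑ i, γ i * (α i * β i / (t * α i + β i))) (Ioi 0) μ := by
    intro ι _ γ α β hα hβ
    simp_rw [Finset.mul_sum, mul_left_comm _ (γ _)]
    refine ⟨?_, integrable_finsetSum _ fun i _ => (hμ _ _ (hα i) (hβ i)).1.const_mul (γ i)⟩
    rw [integral_finsetSum _ fun i _ => (hμ _ _ (hα i) (hβ i)).1.const_mul (γ i)]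
    exact Finset.sum_congr rfl fun i _ => by rw [integral_const_mul, (hμ _ _ (hα i) (hβ i)).2]
  obtain ⟨hl, hlint⟩ := hsum γ α β hα hβ
  obtain ⟨hr, hrint⟩ := hsum δ α' β' hα' hβ'
  rw [hl, hr]
  exact setIntegral_mono_on hlint hrint measurableSet_Ioi fun t ht =>
    mul_le_mul_of_nonneg_left (h t ht) (rpow_nonneg (le_of_lt ht) _)

end Real

lemma mul_div_add_mul_sq_le_of_le_add {a b r p q : ℝ} (ha : 0 < a) (hb : 0 < b) (hr : 0 ≤ r)
    (h : r ≤ p + q) : a * b / (a + b) * r ^ 2 ≤ a * p ^ 2 + b * q ^ 2 := by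
  rw [div_mul_eq_mul_div, div_le_iff₀ (by positivity)]
  have hsq : r ^ 2 ≤ (p + q) ^ 2 := pow_le_pow_left₀ hr h 2
  nlinarith [sq_nonneg (a * p - b * q), mul_le_mul_of_nonneg_left hsq (mul_pos ha hb).le]

lemma mul_div_add_sq_add_mul_div_add_sq {a b : ℝ} (ha : 0 < a) (hb : 0 < b) :
    a * (b / (a + b)) ^ 2 + b * (a / (a + b)) ^ 2 = a * b / (a + b) := by
  field_simp
  ring

namespace ContinuousLinearMap

lemma norm_le_norm_add_norm_adjoint_of_add_eq_one {𝕜 E : Type*} [RCLike 𝕜]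
    [NormedAddCommGroup E] [InnerProductSpace 𝕜 E] [CompleteSpace E] {X Y : E →L[𝕜] E}
    (hXY : X + Y = 1) (w : E) : ‖w‖ ≤ ‖X w‖ + ‖adjoint Y w‖ := by
  have hsplit : ‖w‖ ^ 2 = RCLike.re (inner 𝕜 w (X w)) + RCLike.re (inner 𝕜 (adjoint Y w) w) := by
    rw [adjoint_inner_left, ← map_add, ← inner_add_right, ← add_apply, hXY, one_apply_eq_self,
      inner_self_eq_norm_sq]
  have hle : ‖w‖ * ‖w‖ ≤ ‖w‖ * (‖X w‖ + ‖adjoint Y w‖) := by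
    rw [← sq, hsplit, mul_add, mul_comm ‖w‖ ‖adjoint Y w‖]
    exact add_le_add (re_inner_le_norm _ _) (re_inner_le_norm _ _)
  rcases (norm_nonneg w).eq_or_lt with h0 | hpos
  · rw [← h0]; positivity
  · exact le_of_mul_le_mul_left hle hpos

end ContinuousLinearMap

namespace Matrix

open WithLp

lemma col_mul {l m n α : Type*} [Fintype m] [NonUnitalNonAssocSemiring α] (M : Matrix l m α)
    (N : Matrix m n α) (i : n) : (M * N).col i = M *ᵥ N.col i := by
  ext k
  simp only [col_apply, mul_apply, mulVec, dotProduct]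

section RCLike

variable {𝕜 n : Type*} [RCLike 𝕜] [Fintype n] [DecidableEq n]

lemma mul_div_add_mul_norm_sq_le_of_add_eq_one {x y : Matrix n n 𝕜} (hxy : x + y = 1) {a b : ℝ}
    (ha : 0 < a) (hb : 0 < b) (v : n → 𝕜) :
    a * b / (a + b) * ‖toLp 2 v‖ ^ 2
      ≤ a * ‖toLp 2 (x *ᵥ v)‖ ^ 2 + b * ‖toLp 2 (yᴴ *ᵥ v)‖ ^ 2 := by
  refine mul_div_add_mul_sq_le_of_le_add ha hb (norm_nonneg _) ?_
  have hXY : toEuclideanCLM (n := n) (𝕜 := 𝕜) x + toEuclideanCLM (n := n) (𝕜 := 𝕜) y = 1 := by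
    rw [← map_add, hxy, map_one]
  have := ContinuousLinearMap.norm_le_norm_add_norm_adjoint_of_add_eq_one hXY (toLp 2 v)
  rwa [← ContinuousLinearMap.star_eq_adjoint, ← map_star, star_eq_conjTranspose,
    toEuclideanCLM_toLp, toEuclideanCLM_toLp] at this

lemma mul_diagonal_mul_conjTranspose_apply_self {m : Type*} (M : Matrix m n 𝕜) (d : n → ℝ)
    (i : m) : (M * diagonal (fun k => (d k : 𝕜)) * Mᴴ) i i = ((∑ k, d k * ‖M i k‖ ^ 2 : ℝ) : 𝕜) := by
  rw [mul_apply]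
  simp only [mul_diagonal, conjTranspose_apply]
  push_cast
  refine Finset.sum_congr rfl fun k _ => ?_
  rw [mul_right_comm, RCLike.star_def, RCLike.mul_conj, mul_comm]

lemma trace_mul_diagonal_mul_conjTranspose {m : Type*} [Fintype m] (M : Matrix m n 𝕜)
    (d : n → ℝ) :
    (M * diagonal (fun k => (d k : 𝕜)) * Mᴴ).trace
      = ((∑ k, d k * ‖toLp 2 (M.col k)‖ ^ 2 : ℝ) : 𝕜) := by
  simp only [trace, diag_apply, mul_diagonal_mul_conjTranspose_apply_self,
    EuclideanSpace.norm_sq_eq, col_apply, Finset.mul_sum]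
  push_cast
  exact Finset.sum_comm

lemma trace_conj_diagonal_mul_conj_diagonal (U V : Matrix n n 𝕜) (f g : n → ℝ) :
    (U * diagonal (fun j => (f j : 𝕜)) * Uᴴ * (V * diagonal (fun k => (g k : 𝕜)) * Vᴴ)).trace
      = ((∑ j, ∑ k, f j * g k * ‖(Uᴴ * V) j k‖ ^ 2 : ℝ) : 𝕜) := by
  have hcycle : (U * diagonal (fun j => (f j : 𝕜)) * Uᴴ
      * (V * diagonal (fun k => (g k : 𝕜)) * Vᴴ)).trace
      = (diagonal (fun j => (f j : 𝕜))
          * ((Uᴴ * V) * diagonal (fun k => (g k : 𝕜)) * (Vᴴ * U))).trace := by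
    rw [show U * diagonal (fun j => (f j : 𝕜)) * Uᴴ * (V * diagonal (fun k => (g k : 𝕜)) * Vᴴ)
        = U * (diagonal (fun j => (f j : 𝕜)) * (Uᴴ * V) * diagonal (fun k => (g k : 𝕜)) * Vᴴ) by
          simp only [mul_assoc], trace_mul_comm U]
    simp only [mul_assoc]
  rw [hcycle, show Vᴴ * U = (Uᴴ * V)ᴴ by rw [conjTranspose_mul, conjTranspose_conjTranspose], trace]
  simp only [diag_apply, diagonal_mul, mul_diagonal_mul_conjTranspose_apply_self]
  push_cast
  simp only [Finset.mul_sum, mul_assoc]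

lemma trace_conj_of_mem_unitaryGroup {V : Matrix n n 𝕜} (hV : V ∈ unitaryGroup n 𝕜)
    (M : Matrix n n 𝕜) : (V * M * Vᴴ).trace = M.trace := by
  rw [trace_mul_cycle, ← star_eq_conjTranspose, Unitary.star_mul_self_of_mem hV, one_mul]

lemma trace_mul_conj_mul_conjTranspose_of_mem_unitaryGroup {U V : Matrix n n 𝕜}
    (hU : U ∈ unitaryGroup n 𝕜) (hV : V ∈ unitaryGroup n 𝕜) (P D : Matrix n n 𝕜) :
    (V * P * Uᴴ * (U * D * Uᴴ) * (V * P * Uᴴ)ᴴ).trace = (P * D * Pᴴ).trace := by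
  have hUU : Uᴴ * U = 1 := Unitary.star_mul_self_of_mem hU
  rw [← trace_conj_of_mem_unitaryGroup hV (P * D * Pᴴ)]
  simp only [conjTranspose_mul, conjTranspose_conjTranspose, mul_assoc]
  rw [← mul_assoc Uᴴ U, hUU, one_mul, ← mul_assoc Uᴴ U, hUU, one_mul]

/-- In the bases formed by the columns of `U` and `V`, `x` and `y` split each entry of `Uᴴ * V`
in the proportions `b k : t * a j`, the optimal splitting for the scalar parallel sum
`t * a j * b k / (t * a j + b k)`. -/
lemma exists_add_eq_one_trace_eq {U V : Matrix n n 𝕜} (hU : U ∈ unitaryGroup n 𝕜)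
    (hV : V ∈ unitaryGroup n 𝕜) {a b : n → ℝ} (ha : ∀ j, 0 < a j) (hb : ∀ k, 0 < b k) {t : ℝ}
    (ht : 0 < t) :
    ∃ x y : Matrix n n 𝕜, x + y = 1 ∧
      (t : 𝕜) * (x * (U * diagonal (fun j => (a j : 𝕜)) * Uᴴ) * xᴴ).trace
        + (yᴴ * (V * diagonal (fun k => (b k : 𝕜)) * Vᴴ) * y).trace
      = ((∑ j, ∑ k, t * (a j * b k / (t * a j + b k)) * ‖(Uᴴ * V) j k‖ ^ 2 : ℝ) : 𝕜) := by
  have hpos : ∀ j k, 0 < t * a j + b k := fun j k => add_pos (mul_pos ht (ha j)) (hb k)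
  set K := Uᴴ * V
  let P : Matrix n n 𝕜 := of fun j k => ((b k / (t * a j + b k) : ℝ) : 𝕜) * K j k
  let Q : Matrix n n 𝕜 := of fun j k => ((t * a j / (t * a j + b k) : ℝ) : 𝕜) * K j k
  have hPQ : P + Q = K := by
    ext j k
    simp only [P, Q, add_apply, of_apply, ← add_mul, ← RCLike.ofReal_add, ← add_div,
      add_comm (b k), div_self (hpos j k).ne', RCLike.ofReal_one, one_mul]
  refine ⟨V * Pᴴ * Uᴴ, (U * Q * Vᴴ)ᴴ, ?_, ?_⟩
  · have hVV : V * Vᴴ = 1 := Unitary.mul_star_self_of_mem hV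
    rw [conjTranspose_mul, conjTranspose_mul, conjTranspose_conjTranspose, ← mul_assoc, ← add_mul,
      ← mul_add, ← conjTranspose_add, hPQ, conjTranspose_mul, conjTranspose_conjTranspose,
      ← mul_assoc, hVV, one_mul]
    exact Unitary.mul_star_self_of_mem hU
  rw [conjTranspose_conjTranspose, trace_mul_conj_mul_conjTranspose_of_mem_unitaryGroup hU hV,
    trace_mul_conj_mul_conjTranspose_of_mem_unitaryGroup hV hU,
    trace_mul_diagonal_mul_conjTranspose, trace_mul_diagonal_mul_conjTranspose,
    ← RCLike.ofReal_mul, ← RCLike.ofReal_add]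
  congr 1
  simp only [EuclideanSpace.norm_sq_eq, col_apply, conjTranspose_apply, norm_star, P, Q, of_apply,
    norm_mul, RCLike.norm_ofReal, Finset.mul_sum]
  rw [Finset.sum_comm (γ := n) (f := fun k j => b k * _), ← Finset.sum_add_distrib]
  refine Finset.sum_congr rfl fun j _ => ?_
  rw [← Finset.sum_add_distrib]
  refine Finset.sum_congr rfl fun k _ => ?_
  rw [abs_of_pos (div_pos (hb k) (hpos j k)), abs_of_pos (div_pos (mul_pos ht (ha j)) (hpos j k))]
  linear_combination ‖K j k‖ ^ 2 * mul_div_add_sq_add_mul_div_add_sq (mul_pos ht (ha j)) (hb k)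

lemma sum_norm_col_sq_mul_div_add_le {U V G : Matrix n n 𝕜} (hU : U ∈ unitaryGroup n 𝕜)
    (hV : V ∈ unitaryGroup n 𝕜) {a b c : n → ℝ} (ha : ∀ j, 0 < a j) (hb : ∀ k, 0 < b k)
    (hc : ∀ i, 0 < c i) (hA : G * Gᴴ = U * diagonal (fun j => (a j : 𝕜)) * Uᴴ)
    (hB : G * diagonal (fun i => (c i : 𝕜)) * Gᴴ = V * diagonal (fun k => (b k : 𝕜)) * Vᴴ)
    {t : ℝ} (ht : 0 < t) :
    ∑ i, ‖toLp 2 (G.col i)‖ ^ 2 * (c i / (t + c i))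
      ≤ ∑ j, ∑ k, ‖(Uᴴ * V) j k‖ ^ 2 * (a j * b k / (t * a j + b k)) := by
  obtain ⟨x, y, hxy, htr⟩ := exists_add_eq_one_trace_eq hU hV ha hb ht
  have hx : x * (G * Gᴴ) * xᴴ = x * G * diagonal (fun _ => ((1 : ℝ) : 𝕜)) * (x * G)ᴴ := by
    simp only [RCLike.ofReal_one, diagonal_one, mul_one, conjTranspose_mul, mul_assoc]
  have hy : yᴴ * (G * diagonal (fun i => (c i : 𝕜)) * Gᴴ) * y
      = yᴴ * G * diagonal (fun i => (c i : 𝕜)) * (yᴴ * G)ᴴ := by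
    simp only [conjTranspose_mul, conjTranspose_conjTranspose, mul_assoc]
  rw [← hA, ← hB, hx, hy, trace_mul_diagonal_mul_conjTranspose,
    trace_mul_diagonal_mul_conjTranspose, ← RCLike.ofReal_mul, ← RCLike.ofReal_add] at htr
  have hcol : ∀ i, t * c i / (t + c i) * ‖toLp 2 (G.col i)‖ ^ 2
      ≤ t * (1 * ‖toLp 2 ((x * G).col i)‖ ^ 2) + c i * ‖toLp 2 ((yᴴ * G).col i)‖ ^ 2 := fun i => by
    rw [one_mul, col_mul, col_mul]
    exact mul_div_add_mul_norm_sq_le_of_add_eq_one hxy ht (hc i) _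
  have key : ∑ i, t * c i / (t + c i) * ‖toLp 2 (G.col i)‖ ^ 2
      ≤ ∑ j, ∑ k, t * (a j * b k / (t * a j + b k)) * ‖(Uᴴ * V) j k‖ ^ 2 := by
    rw [← RCLike.ofReal_injective htr, Finset.mul_sum, ← Finset.sum_add_distrib]
    exact Finset.sum_le_sum fun i _ => hcol i
  refine le_of_mul_le_mul_left ?_ ht
  simp only [Finset.mul_sum] at key ⊢
  calc ∑ i, t * (‖toLp 2 (G.col i)‖ ^ 2 * (c i / (t + c i)))
      = ∑ i, t * c i / (t + c i) * ‖toLp 2 (G.col i)‖ ^ 2 :=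
        Finset.sum_congr rfl fun i _ => by ring
    _ ≤ _ := key
    _ = _ := Finset.sum_congr rfl fun j _ => Finset.sum_congr rfl fun k _ => by ring

end RCLike

variable {d : ℕ} {A B : Matrix (Fin d) (Fin d) ℂ}

lemma isHermitian_mpow (A : Matrix (Fin d) (Fin d) ℂ) (r : ℝ) : (mpow A r).IsHermitian :=
  IsSelfAdjoint.cfc

lemma IsHermitian.mpow_zero (hA : A.IsHermitian) : mpow A 0 = 1 := by
  simp only [mpow, Real.rpow_zero]
  exact cfc_const_one ℝ A hA

lemma IsHermitian.mpow_one (hA : A.IsHermitian) : mpow A 1 = A := by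
  simp only [mpow, Real.rpow_one]
  exact cfc_id' ℝ A hA

lemma PosDef.exists_mpow_eq (hA : A.PosDef) :
    ∃ (U : Matrix (Fin d) (Fin d) ℂ) (a : Fin d → ℝ), U ∈ unitaryGroup (Fin d) ℂ ∧ (∀ i, 0 < a i) ∧
      ∀ r, mpow A r = U * diagonal (fun i => ((a i ^ r : ℝ) : ℂ)) * Uᴴ := by
  refine ⟨hA.1.eigenvectorUnitary, hA.1.eigenvalues, hA.1.eigenvectorUnitary.2, hA.eigenvalues_pos,
    fun r => ?_⟩
  rw [mpow, hA.1.cfc_eq, IsHermitian.cfc, Unitary.conjStarAlgAut_apply]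
  rfl

lemma PosDef.mpow_add (hA : A.PosDef) (r r' : ℝ) : mpow A (r + r') = mpow A r * mpow A r' := by
  have hcont : ∀ r : ℝ, ContinuousOn (fun x : ℝ => x ^ r) (spectrum ℝ A) := fun _ =>
    A.finite_real_spectrum.continuousOn _
  rw [mpow, mpow, mpow, ← cfc_mul _ _ A (hcont r) (hcont r')]
  refine cfc_congr fun x hx => Real.rpow_add ?_ r r'
  obtain ⟨i, rfl⟩ := hA.1.spectrum_real_eq_range_eigenvalues ▸ hx
  exact hA.eigenvalues_pos i

lemma PosDef.exists_gm_eq (hA : A.PosDef) (hB : B.PosDef) :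
    ∃ (G : Matrix (Fin d) (Fin d) ℂ) (c : Fin d → ℝ), (∀ i, 0 < c i) ∧ G * Gᴴ = A ∧
      G * diagonal (fun i => (c i : ℂ)) * Gᴴ = B ∧
      ∀ s, gm s A B = G * diagonal (fun i => ((c i ^ s : ℝ) : ℂ)) * Gᴴ := by
  set S := mpow A (1 / 2)
  set S' := mpow A (-(1 / 2))
  have hSS : S * S = A := by rw [← hA.mpow_add, add_halves, hA.1.mpow_one]
  have hSS' : S * S' = 1 := by rw [← hA.mpow_add, add_neg_cancel, hA.1.mpow_zero]
  have hS'S : S' * S = 1 := by rw [← hA.mpow_add, neg_add_cancel, hA.1.mpow_zero]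
  have hS : Sᴴ = S := (isHermitian_mpow A _).eq
  have hC : (S' * B * S').PosDef := by
    have hinj : Function.Injective S'.mulVec := fun v w h => by
      simpa [mulVec_mulVec, hSS'] using congrArg (S *ᵥ ·) h
    simpa only [show S'ᴴ = S' from (isHermitian_mpow A _).eq] using
      hB.conjTranspose_mul_mul_same hinj
  obtain ⟨W, c, hW, hc, hmpow⟩ := hC.exists_mpow_eq
  have hgm : ∀ s, gm s A B = S * W * diagonal (fun i => ((c i ^ s : ℝ) : ℂ)) * (S * W)ᴴ :=
    fun s => by
      rw [show gm s A B = S * mpow (S' * B * S') s * S from rfl, hmpow, conjTranspose_mul, hS]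
      simp only [mul_assoc]
  refine ⟨S * W, c, hc, ?_, ?_, hgm⟩
  · have hWW : W * Wᴴ = 1 := Unitary.mul_star_self_of_mem hW
    rw [conjTranspose_mul, hS, mul_assoc, ← mul_assoc W, hWW, one_mul, hSS]
  · have h1 := hgm 1
    simp only [Real.rpow_one] at h1
    rw [← h1, show gm 1 A B = S * mpow (S' * B * S') 1 * S from rfl, hC.1.mpow_one, ← mul_assoc,
      ← mul_assoc, hSS', one_mul, mul_assoc, hS'S, mul_one]

end Matrix

open Matrix

theorem trace_gm_le {d : ℕ} (A B : Matrix (Fin d) (Fin d) ℂ)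
    (hA : A.PosDef) (hB : B.PosDef) (s : ℝ) (hs : s ∈ Set.Icc (0 : ℝ) 1) :
    (gm s A B).trace ≤ (mpow A ((1 - s) / 2) * mpow B s * mpow A ((1 - s) / 2)).trace := by
  obtain ⟨G, c, hc, hGA, hGB, hgm⟩ := hA.exists_gm_eq hB
  have hrhs : (mpow A ((1 - s) / 2) * mpow B s * mpow A ((1 - s) / 2)).trace
      = (mpow A (1 - s) * mpow B s).trace := by
    rw [trace_mul_cycle, ← hA.mpow_add, add_halves]
  rw [hgm, hrhs]
  rcases hs.1.eq_or_lt with rfl | hs0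
  · simp [hGA, hA.1.mpow_one, hB.1.mpow_zero]
  rcases hs.2.eq_or_lt with rfl | hs1
  · simp [hGB, hA.1.mpow_zero, hB.1.mpow_one]
  obtain ⟨U, a, hU, ha, hmA⟩ := hA.exists_mpow_eq
  obtain ⟨V, b, hV, hb, hmB⟩ := hB.exists_mpow_eq
  have hA1 := hA.1.mpow_one ▸ hmA 1
  have hB1 := hB.1.mpow_one ▸ hmB 1
  simp only [Real.rpow_one] at hA1 hB1
  rw [hmA, hmB, ← RCLike.ofReal_eq_complex_ofReal, trace_mul_diagonal_mul_conjTranspose,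
    trace_conj_diagonal_mul_conj_diagonal, RCLike.ofReal_le_ofReal]
  have key := Real.sum_mul_rpow_mul_rpow_le_of_forall_sum_le (κ := Fin d × Fin d) ⟨hs0, hs1⟩
    (γ := fun i => ‖WithLp.toLp 2 (G.col i)‖ ^ 2) (α := 1) (β := c)
    (δ := fun p => ‖(Uᴴ * V) p.1 p.2‖ ^ 2) (α' := fun p => a p.1) (β' := fun p => b p.2)
    (fun _ => one_pos) hc (fun p => ha p.1) (fun p => hb p.2) fun t ht => by
      simpa [Fintype.sum_prod_type] using
        sum_norm_col_sq_mul_div_add_le hU hV ha hb hc (hGA.trans hA1) (hGB.trans hB1) ht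
  simpa [Fintype.sum_prod_type, mul_comm, mul_left_comm, mul_assoc] using key
end

section
/- Log-majorization implies weak majorization: for vectors x, y of positive reals, if log x ≺_w log y (entrywise logarithm, weak majorization) and the full sums of log x and log y of the k largest entries satisfy the log-majorization conditions, then x ≺_w y. -/
open scoped ComplexOrder

/-!
Since `log` is concave, `a - b ≤ a (log a - log b)` for `a, b > 0`. Summing over the `k` largest
entries, `∑ (xⱼ - yⱼ) ≤ ∑ xⱼ cⱼ` with `cⱼ = log xⱼ - log yⱼ`, whose partial sums are `≤ 0` by
log-majorization. As the weights `xⱼ` are nonnegative and decreasing, Abel summation turns the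
right-hand side into a nonnegative combination of these partial sums, so it is `≤ 0`.
-/

open Finset

lemma Fin.sum_filter_val_lt {M : Type*} [AddCommMonoid M] {d k : ℕ} (hk : k ≤ d) (g : ℕ → M) :
    ∑ j ∈ univ.filter (fun j : Fin d => (j : ℕ) < k), g j = ∑ n ∈ range k, g n := by
  rw [sum_filter, Fin.sum_univ_eq_sum_range (fun n => if n < k then g n else 0), ← sum_filter]
  congr 1
  ext n
  simp only [mem_filter, mem_range]
  omega

lemma Finset.sum_range_mul_nonpos_of_antitoneOn {R : Type*} [CommRing R] [LinearOrder R]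
    [IsStrictOrderedRing R] {w c : ℕ → R} {k : ℕ} (hw : AntitoneOn w (Set.Iio k))
    (hw_nonneg : ∀ i < k, 0 ≤ w i) (hc : ∀ m ≤ k, ∑ i ∈ range m, c i ≤ 0) :
    ∑ i ∈ range k, w i * c i ≤ 0 := by
  cases k with
  | zero => simp
  | succ k =>
    have h_last : w k * ∑ i ∈ range (k + 1), c i ≤ 0 :=
      mul_nonpos_of_nonneg_of_nonpos (hw_nonneg k k.lt_succ_self) (hc _ le_rfl)
    have h_steps : 0 ≤ ∑ i ∈ range k, (w (i + 1) - w i) * ∑ j ∈ range (i + 1), c j := by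
      refine sum_nonneg fun i hi => mul_nonneg_of_nonpos_of_nonpos ?_ (hc _ ?_)
      · have hi : i < k := mem_range.mp hi
        exact sub_nonpos.mpr (hw (Set.mem_Iio.mpr (by omega)) (Set.mem_Iio.mpr (by omega))
          i.le_succ)
      · have := mem_range.mp hi
        omega
    have h_parts := sum_range_by_parts w c (k + 1)
    simp only [smul_eq_mul, add_tsub_cancel_right] at h_parts
    linarith

lemma Real.sub_le_mul_log_sub_log {a b : ℝ} (ha : 0 < a) (hb : 0 < b) :
    a - b ≤ a * (log a - log b) := by
  have h := Real.log_le_sub_one_of_pos (div_pos hb ha)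
  rw [Real.log_div hb.ne' ha.ne', le_sub_iff_add_le, le_div_iff₀ ha] at h
  linarith

theorem Finset.sum_range_le_of_sum_range_log_le {a b : ℕ → ℝ} {k : ℕ}
    (ha : ∀ i < k, 0 < a i) (hb : ∀ i < k, 0 < b i) (ha_anti : AntitoneOn a (Set.Iio k))
    (hlog : ∀ m ≤ k, ∑ i ∈ range m, Real.log (a i) ≤ ∑ i ∈ range m, Real.log (b i)) :
    ∑ i ∈ range k, a i ≤ ∑ i ∈ range k, b i := by
  have h_pointwise : ∑ i ∈ range k, (a i - b i)
      ≤ ∑ i ∈ range k, a i * (Real.log (a i) - Real.log (b i)) :=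
    sum_le_sum fun i hi =>
      Real.sub_le_mul_log_sub_log (ha i (mem_range.mp hi)) (hb i (mem_range.mp hi))
  have h_abel : ∑ i ∈ range k, a i * (Real.log (a i) - Real.log (b i)) ≤ 0 :=
    sum_range_mul_nonpos_of_antitoneOn ha_anti (fun i hi => (ha i hi).le) fun m hm => by
      rw [sum_sub_distrib, sub_nonpos]
      exact hlog m hm
  rw [sum_sub_distrib] at h_pointwise
  linarith

theorem log_majorization_implies_weak_majorization_general {d : ℕ} (x y : Fin d → ℝ)
    (hx : ∀ i, 0 < x i) (hy : ∀ i, 0 < y i)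
    (hxs : Antitone x)
    (hmaj : ∀ k : ℕ, k ≤ d →
      ∑ j ∈ Finset.univ.filter (fun j : Fin d => (j : ℕ) < k), Real.log (x j)
      ≤ ∑ j ∈ Finset.univ.filter (fun j : Fin d => (j : ℕ) < k), Real.log (y j)) :
    ∀ k : ℕ, k ≤ d → ∑ j ∈ Finset.univ.filter (fun j : Fin d => (j : ℕ) < k), x j
      ≤ ∑ j ∈ Finset.univ.filter (fun j : Fin d => (j : ℕ) < k), y j := by
  set X : ℕ → ℝ := Function.extend Fin.val x 0
  set Y : ℕ → ℝ := Function.extend Fin.val y 0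
  have hxX (j : Fin d) : x j = X j := (Fin.val_injective.extend_apply x 0 j).symm
  have hyY (j : Fin d) : y j = Y j := (Fin.val_injective.extend_apply y 0 j).symm
  intro k hk
  simp only [hxX, hyY, Fin.sum_filter_val_lt hk] at hmaj ⊢
  refine sum_range_le_of_sum_range_log_le (fun i hi => ?_) (fun i hi => ?_) ?_ fun m hm => ?_
  · simpa [hxX] using hx ⟨i, by omega⟩
  · simpa [hyY] using hy ⟨i, by omega⟩
  · intro i hi j hj hij
    simpa [hxX] using hxs (show (⟨i, by grind⟩ : Fin d) ≤ ⟨j, by grind⟩ from hij)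
  · have hmd := hm.trans hk
    rw [← Fin.sum_filter_val_lt hmd, ← Fin.sum_filter_val_lt hmd]
    exact hmaj m hmd

theorem log_majorization_implies_weak_majorization {d : ℕ} (x y : Fin d → ℝ)
    (hx : ∀ i, 0 < x i) (hy : ∀ i, 0 < y i)
    (hxs : Antitone x) (hys : Antitone y)
    (hmaj : ∀ k : ℕ, k ≤ d →
      ∑ j ∈ Finset.univ.filter (fun j : Fin d => (j : ℕ) < k), Real.log (x j)
      ≤ ∑ j ∈ Finset.univ.filter (fun j : Fin d => (j : ℕ) < k), Real.log (y j)) :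
    ∀ k : ℕ, k ≤ d → ∑ j ∈ Finset.univ.filter (fun j : Fin d => (j : ℕ) < k), x j
      ≤ ∑ j ∈ Finset.univ.filter (fun j : Fin d => (j : ℕ) < k), y j :=
  log_majorization_implies_weak_majorization_general x y hx hy hxs hmaj
end

section
/- Matrix Hölder inequality: for positive semi-definite matrices A, B and θ ∈ (0,1), Tr(AB) ≤ (Tr(A^(1/θ)))^θ · (Tr(B^(1/(1−θ))))^(1−θ). -/
/-
Diagonalising `A = U diag(λ) U*` and `B = V diag(μ) V*` gives `Tr(AB) = ∑ᵢⱼ λᵢ |Wᵢⱼ|² μⱼ` with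
`W = U* V` unitary, so the weights `|Wᵢⱼ|²` form a doubly stochastic matrix. For doubly stochastic
weights the scalar Hölder inequality on the pairs `(i, j)` bounds this sum, since the unit row and
column sums collapse the two `Lᵖ` norms to those of `λ` and `μ`.
-/

open scoped ComplexOrder

open Matrix Finset

section

variable {n 𝕜 : Type*} [Fintype n] [DecidableEq n] [RCLike 𝕜]

theorem Matrix.sum_mul_mul_le_of_mem_doublyStochastic {M : Matrix n n ℝ}
    (hM : M ∈ doublyStochastic ℝ n) {p q : ℝ} (hpq : p.HolderConjugate q)
    {a b : n → ℝ} (ha : ∀ i, 0 ≤ a i) (hb : ∀ j, 0 ≤ b j) :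
    ∑ i, ∑ j, a i * M i j * b j ≤ (∑ i, a i ^ p) ^ (1 / p) * (∑ j, b j ^ q) ^ (1 / q) := by
  obtain ⟨hM0, hrow, hcol⟩ := mem_doublyStochastic_iff_sum.mp hM
  -- give each factor its share of the weight `M i j = M i j ^ p⁻¹ * M i j ^ q⁻¹`
  set f : n × n → ℝ := fun x => M x.1 x.2 ^ p⁻¹ * a x.1
  set g : n × n → ℝ := fun x => M x.1 x.2 ^ q⁻¹ * b x.2
  have hfg : ∑ x, f x * g x = ∑ i, ∑ j, a i * M i j * b j := by
    rw [Fintype.sum_prod_type]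
    refine sum_congr rfl fun i _ => sum_congr rfl fun j _ => ?_
    have hsplit : M i j ^ p⁻¹ * M i j ^ q⁻¹ = M i j := by
      rw [← Real.rpow_add' (hM0 i j) (by simp [hpq.inv_add_inv_eq_one]),
        hpq.inv_add_inv_eq_one, Real.rpow_one]
    simp only [f, g]
    linear_combination (a i * b j) * hsplit
  have hf : ∑ x, f x ^ p = ∑ i, a i ^ p := by
    rw [Fintype.sum_prod_type]
    refine sum_congr rfl fun i _ => ?_
    simp only [f, Real.mul_rpow (Real.rpow_nonneg (hM0 _ _) _) (ha i),
      Real.rpow_inv_rpow (hM0 _ _) hpq.ne_zero, ← sum_mul, hrow, one_mul]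
  have hg : ∑ x, g x ^ q = ∑ j, b j ^ q := by
    rw [Fintype.sum_prod_type_right]
    refine sum_congr rfl fun j _ => ?_
    simp only [g, Real.mul_rpow (Real.rpow_nonneg (hM0 _ _) _) (hb j),
      Real.rpow_inv_rpow (hM0 _ _) hpq.symm.ne_zero, ← sum_mul, hcol, one_mul]
  rw [← hfg, ← hf, ← hg]
  exact Real.inner_le_Lp_mul_Lq_of_nonneg univ hpq
    (fun x _ => mul_nonneg (Real.rpow_nonneg (hM0 _ _) _) (ha _))
    (fun x _ => mul_nonneg (Real.rpow_nonneg (hM0 _ _) _) (hb _))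

theorem Matrix.norm_sq_entries_mem_doublyStochastic {U : Matrix n n 𝕜} (hU : U ∈ unitaryGroup n 𝕜) :
    (of fun i j => ‖U i j‖ ^ 2 : Matrix n n ℝ) ∈ doublyStochastic ℝ n := by
  refine mem_doublyStochastic_iff_sum.mpr ⟨fun _ _ => sq_nonneg _, fun i => ?_, fun j => ?_⟩
  · have h := congr_fun₂ (mem_unitaryGroup_iff.mp hU) i i
    simp only [mul_apply, star_apply, RCLike.star_def, RCLike.mul_conj, one_apply_eq] at h
    exact_mod_cast h
  · have h := congr_fun₂ (mem_unitaryGroup_iff'.mp hU) j j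
    simp only [mul_apply, star_apply, RCLike.star_def, RCLike.conj_mul, one_apply_eq] at h
    exact_mod_cast h

theorem Matrix.IsHermitian.trace_cfc {A : Matrix n n 𝕜} (hA : A.IsHermitian) (f : ℝ → ℝ) :
    (cfc f A).trace = ∑ i, (f (hA.eigenvalues i) : 𝕜) := by
  rw [hA.cfc_eq, IsHermitian.cfc, Unitary.conjStarAlgAut_apply, trace_mul_cycle,
    Unitary.coe_star_mul_self, one_mul, trace_diagonal]
  rfl

theorem Matrix.trace_diagonal_mul_diagonal_mul_star (a b : n → ℝ) (W : Matrix n n 𝕜) :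
    (diagonal (RCLike.ofReal ∘ a) * W * diagonal (RCLike.ofReal ∘ b) * star W).trace
      = ∑ i, ∑ j, ((a i * ‖W i j‖ ^ 2 * b j : ℝ) : 𝕜) := by
  simp only [trace, diag_apply, mul_apply, diagonal_apply, star_apply, ite_mul, zero_mul,
    sum_ite_eq, mem_univ, if_true, mul_ite, mul_zero, sum_ite_eq', Function.comp_apply]
  refine sum_congr rfl fun i _ => sum_congr rfl fun j _ => ?_
  rw [RCLike.star_def]
  push_cast
  rw [← RCLike.mul_conj]
  ring

theorem Matrix.IsHermitian.trace_mul_eq_sum {A B : Matrix n n 𝕜} (hA : A.IsHermitian)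
    (hB : B.IsHermitian) :
    (A * B).trace = ∑ i, ∑ j, ((hA.eigenvalues i *
      ‖(star (hA.eigenvectorUnitary : Matrix n n 𝕜) * hB.eigenvectorUnitary) i j‖ ^ 2 *
        hB.eigenvalues j : ℝ) : 𝕜) := by
  rw [← trace_diagonal_mul_diagonal_mul_star]
  conv_lhs => rw [hA.spectral_theorem, hB.spectral_theorem, Unitary.conjStarAlgAut_apply,
    Unitary.conjStarAlgAut_apply]
  simp only [Matrix.mul_assoc, StarMul.star_mul, star_star]
  rw [trace_mul_comm]
  simp only [Matrix.mul_assoc]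

end

theorem matrix_holder {d : ℕ} (A B : Matrix (Fin d) (Fin d) ℂ)
    (hA : A.PosSemidef) (hB : B.PosSemidef) (θ : ℝ) (hθ : θ ∈ Set.Ioo (0 : ℝ) 1) :
    (A * B).trace.re ≤ (mpow A (1 / θ)).trace.re ^ θ * (mpow B (1 / (1 - θ))).trace.re ^ (1 - θ) := by
  obtain ⟨hθ₀, hθ₁⟩ := hθ
  have hpq : (1 / θ).HolderConjugate (1 / (1 - θ)) :=
    Real.holderConjugate_one_div hθ₀ (sub_pos.mpr hθ₁) (add_sub_cancel θ 1)
  have hA' : A.IsHermitian := hA.isHermitian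
  have hB' : B.IsHermitian := hB.isHermitian
  have hW : star (hA'.eigenvectorUnitary : Matrix (Fin d) (Fin d) ℂ) * hB'.eigenvectorUnitary ∈
      unitaryGroup (Fin d) ℂ :=
    Submonoid.mul_mem _ (Unitary.star_mem hA'.eigenvectorUnitary.2) hB'.eigenvectorUnitary.2
  have hbound := sum_mul_mul_le_of_mem_doublyStochastic
    (norm_sq_entries_mem_doublyStochastic hW) hpq hA.eigenvalues_nonneg hB.eigenvalues_nonneg
  rw [mpow, mpow, hA'.trace_cfc, hB'.trace_cfc, hA'.trace_mul_eq_sum hB']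
  simpa only [← RCLike.re_to_complex, map_sum, RCLike.ofReal_re, of_apply, one_div_one_div]
    using hbound
end

section
/- Concavity of the classical auxiliary function: for a classical channel Q(y|x) on finite alphabets and probability distribution P on X, the function E₀(s,P) = −log Σ_y (Σₓ P(x) Q(y|x)^(1/(1+s)))^(1+s) is concave in s on [0, ∞). -/
open scoped ComplexOrder

/-!
With `t = 1 + s`, each summand `t ↦ (∑ₓ P x Q(y|x)^(1/t))^t` is log-convex: writing
`t = a t₁ + b t₂`, the term `P x Q(y|x)^(1/t)` factors as
`(P x Q(y|x)^(1/t₁))^(a t₁/t) (P x Q(y|x)^(1/t₂))^(b t₂/t)`, and Hölder's inequality with the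
exponents `a t₁/t + b t₂/t = 1` bounds the inner sum. A second application of Hölder shows that a
sum of log-convex functions is log-convex, so `log ∑_y …` is convex in `t`, hence in `s`.
-/

open Finset Real

theorem sum_rpow_mul_rpow_le {ι : Type*} (s : Finset ι) {f g : ι → ℝ}
    (hf : ∀ i ∈ s, 0 ≤ f i) (hg : ∀ i ∈ s, 0 ≤ g i) {p q : ℝ} (hp : 0 < p) (hq : 0 < q)
    (hpq : p + q = 1) :
    ∑ i ∈ s, f i ^ p * g i ^ q ≤ (∑ i ∈ s, f i) ^ p * (∑ i ∈ s, g i) ^ q := by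
  have hconj : HolderConjugate p⁻¹ q⁻¹ :=
    holderConjugate_iff.mpr ⟨(one_lt_inv₀ hp).2 (by linarith), by rw [inv_inv, inv_inv, hpq]⟩
  have key := inner_le_Lp_mul_Lq_of_nonneg s hconj (fun i hi => rpow_nonneg (hf i hi) p)
    (fun i hi => rpow_nonneg (hg i hi) q)
  have cancel : ∀ {r x : ℝ}, 0 < r → 0 ≤ x → (x ^ r) ^ r⁻¹ = x := fun hr hx => by
    rw [← rpow_mul hx, mul_inv_cancel₀ hr.ne', rpow_one]
  rwa [sum_congr rfl fun i hi => cancel hp (hf i hi), sum_congr rfl fun i hi => cancel hq (hg i hi),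
    one_div, one_div, inv_inv, inv_inv] at key

section LogConvex

variable {E : Type*} [AddCommGroup E] [Module ℝ E] {s : Set E}

/-- Log-convexity, stated multiplicatively so that `f` may vanish. -/
def LogConvexOn (s : Set E) (f : E → ℝ) : Prop :=
  ∀ ⦃x⦄, x ∈ s → ∀ ⦃y⦄, y ∈ s → ∀ ⦃a b : ℝ⦄, 0 < a → 0 < b → a + b = 1 →
    f (a • x + b • y) ≤ f x ^ a * f y ^ b

theorem LogConvexOn.sum {ι : Type*} (t : Finset ι) {f : ι → E → ℝ}
    (hf₀ : ∀ i ∈ t, ∀ x ∈ s, 0 ≤ f i x) (hf : ∀ i ∈ t, LogConvexOn s (f i)) :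
    LogConvexOn s fun x => ∑ i ∈ t, f i x := by
  intro x hx y hy a b ha hb hab
  calc ∑ i ∈ t, f i (a • x + b • y)
      ≤ ∑ i ∈ t, f i x ^ a * f i y ^ b := sum_le_sum fun i hi => hf i hi hx hy ha hb hab
    _ ≤ (∑ i ∈ t, f i x) ^ a * (∑ i ∈ t, f i y) ^ b :=
      sum_rpow_mul_rpow_le t (fun i hi => hf₀ i hi x hx) (fun i hi => hf₀ i hi y hy) ha hb hab

theorem LogConvexOn.convexOn_log {f : E → ℝ} (hs : Convex ℝ s) (hf₀ : ∀ x ∈ s, 0 < f x)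
    (hf : LogConvexOn s f) : ConvexOn ℝ s fun x => log (f x) := by
  refine ⟨hs, fun x hx y hy a b ha hb hab => ?_⟩
  rcases ha.eq_or_lt with rfl | ha
  · simp [show b = 1 by linarith]
  rcases hb.eq_or_lt with rfl | hb
  · simp [show a = 1 by linarith]
  calc log (f (a • x + b • y))
      ≤ log (f x ^ a * f y ^ b) :=
        log_le_log (hf₀ _ (hs hx hy ha.le hb.le hab)) (hf hx hy ha hb hab)
    _ = a • log (f x) + b • log (f y) := by
      rw [log_mul (rpow_pos_of_pos (hf₀ x hx) a).ne' (rpow_pos_of_pos (hf₀ y hy) b).ne',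
        log_rpow (hf₀ x hx), log_rpow (hf₀ y hy), smul_eq_mul, smul_eq_mul]

end LogConvex

theorem mul_rpow_one_div_eq_rpow_mul_rpow {w c t₁ t₂ a b : ℝ} (hw : 0 ≤ w) (hc : 0 ≤ c)
    (ht₁ : 0 < t₁) (ht₂ : 0 < t₂) (ha : 0 < a) (hb : 0 < b) (hab : a + b = 1) :
    w * c ^ (1 / (a * t₁ + b * t₂)) =
      (w * c ^ (1 / t₁)) ^ (a * t₁ / (a * t₁ + b * t₂)) *
        (w * c ^ (1 / t₂)) ^ (b * t₂ / (a * t₁ + b * t₂)) := by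
  set t := a * t₁ + b * t₂
  have ht : 0 < t := by positivity
  have hp : 1 / t₁ * (a * t₁ / t) = a / t := by field_simp
  have hq : 1 / t₂ * (b * t₂ / t) = b / t := by field_simp
  have hpq : a * t₁ / t + b * t₂ / t = 1 := by rw [← add_div, div_self ht.ne']
  rw [mul_rpow hw (rpow_nonneg hc _), mul_rpow hw (rpow_nonneg hc _), ← rpow_mul hc,
    ← rpow_mul hc, hp, hq, mul_mul_mul_comm, ← rpow_add' hw (by simp [hpq]),
    ← rpow_add' hc (by rw [← add_div, hab]; positivity), hpq, rpow_one, ← add_div, hab]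

theorem logConvexOn_sum_mul_rpow_one_div_rpow {ι : Type*} (s : Finset ι) {w c : ι → ℝ}
    (hw : ∀ i ∈ s, 0 ≤ w i) (hc : ∀ i ∈ s, 0 ≤ c i) :
    LogConvexOn (Set.Ioi (0 : ℝ)) fun t => (∑ i ∈ s, w i * c i ^ (1 / t)) ^ t := by
  intro t₁ ht₁ t₂ ht₂ a b ha hb hab
  simp only [Set.mem_Ioi, smul_eq_mul] at ht₁ ht₂ ⊢
  set t := a * t₁ + b * t₂
  have ht : 0 < t := by positivity
  set A := ∑ i ∈ s, w i * c i ^ (1 / t₁)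
  set B := ∑ i ∈ s, w i * c i ^ (1 / t₂)
  have hterm : ∀ r : ℝ, ∀ i ∈ s, 0 ≤ w i * c i ^ r := fun r i hi =>
    mul_nonneg (hw i hi) (rpow_nonneg (hc i hi) r)
  have hA : 0 ≤ A := sum_nonneg (hterm _)
  have hB : 0 ≤ B := sum_nonneg (hterm _)
  have holder : ∑ i ∈ s, w i * c i ^ (1 / t) ≤ A ^ (a * t₁ / t) * B ^ (b * t₂ / t) := by
    rw [sum_congr rfl fun i hi =>
      mul_rpow_one_div_eq_rpow_mul_rpow (hw i hi) (hc i hi) ht₁ ht₂ ha hb hab]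
    exact sum_rpow_mul_rpow_le s (hterm _) (hterm _) (by positivity) (by positivity)
      (by rw [← add_div, div_self ht.ne'])
  calc (∑ i ∈ s, w i * c i ^ (1 / t)) ^ t
      ≤ (A ^ (a * t₁ / t) * B ^ (b * t₂ / t)) ^ t :=
        rpow_le_rpow (sum_nonneg (hterm _)) holder ht.le
    _ = (A ^ t₁) ^ a * (B ^ t₂) ^ b := by
      rw [mul_rpow (rpow_nonneg hA _) (rpow_nonneg hB _), ← rpow_mul hA, ← rpow_mul hB,
        ← rpow_mul hA, ← rpow_mul hB, div_mul_cancel₀ _ ht.ne', div_mul_cancel₀ _ ht.ne',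
        mul_comm a, mul_comm b]

theorem classical_auxiliary_function_concave {X Y : Type*} [Fintype X] [Fintype Y]
    (P : X → ℝ) (hP : ∀ x, 0 ≤ P x) (hP1 : ∑ x, P x = 1)
    (Q : X → Y → ℝ) (hQ : ∀ x y, 0 ≤ Q x y) (hQ1 : ∀ x, ∑ y, Q x y = 1) :
    ConcaveOn ℝ (Set.Ici (0 : ℝ))
      (fun s => -Real.log (∑ y, (∑ x, P x * Q x y ^ (1 / (1 + s))) ^ (1 + s))) := by
  set G : ℝ → ℝ := fun t => ∑ y, (∑ x, P x * Q x y ^ (1 / t)) ^ t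
  have hinner₀ : ∀ (y : Y) (t : ℝ), 0 ≤ ∑ x, P x * Q x y ^ (1 / t) := fun y t =>
    sum_nonneg fun x _ => mul_nonneg (hP x) (rpow_nonneg (hQ x y) _)
  have hG : LogConvexOn (Set.Ioi (0 : ℝ)) G :=
    LogConvexOn.sum _ (fun y _ t _ => rpow_nonneg (hinner₀ y t) t)
      fun y _ => logConvexOn_sum_mul_rpow_one_div_rpow _ (fun x _ => hP x) fun x _ => hQ x y
  obtain ⟨x₀, -, hx₀⟩ := exists_ne_zero_of_sum_ne_zero (s := univ) (by rw [hP1]; exact one_ne_zero)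
  obtain ⟨y₀, -, hy₀⟩ :=
    exists_ne_zero_of_sum_ne_zero (s := univ) (by rw [hQ1 x₀]; exact one_ne_zero)
  have hG₀ : ∀ t ∈ Set.Ioi (0 : ℝ), 0 < G t := fun t _ => by
    refine sum_pos' (fun y _ => rpow_nonneg (hinner₀ y t) t) ⟨y₀, mem_univ _, rpow_pos_of_pos ?_ t⟩
    refine sum_pos' (fun x _ => mul_nonneg (hP x) (rpow_nonneg (hQ x y₀) _)) ⟨x₀, mem_univ _, ?_⟩
    exact mul_pos ((hP x₀).lt_of_ne' hx₀) (rpow_pos_of_pos ((hQ x₀ y₀).lt_of_ne' hy₀) _)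
  have hlogG := ((hG.convexOn_log (convex_Ioi 0) hG₀).translate_right 1).subset
    (fun s (hs : 0 ≤ s) => show 0 < 1 + s by linarith) (convex_Ici 0)
  exact hlogG.neg
end
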